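/- Let x_1 < x_2 < ... < x_n be reals and suppose pairs (i,j), (k,l) with i < j and k < l satisfy i < k and l < j (strictly nested index intervals). Then the comparison between x_i + x_j and x_k + x_l is not determined by the ordering alone: there exist sorted real sequences y and z extending the same order type such that y_i + y_j < y_k + y_l while z_i + z_j > z_k + z_l. -/
import Mathlib


theorem nested_pairs_incomparable (i j k l : ℕ)
    (hij : i < j) (hkl : k < l) (hik : i < k) (hlj : l < j) :
    ∃ y z : ℕ → ℝ, StrictMono y ∧ StrictMono z ∧
      y i + y j < y k + y l ∧ z k + z l < z i + z j := by
  refine ⟨fun n => -((1/2 : ℝ))^n, fun n => (2 : ℝ)^n, ?_, ?_, ?_, ?_⟩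
  · intro a b h
    simp only [neg_lt_neg_iff]
    exact pow_lt_pow_right_of_lt_one₀ (by norm_num) (by norm_num) h
  · intro a b h
    exact pow_lt_pow_right₀ one_lt_two h
  · have hr : (0:ℝ) < 1/2 := by norm_num
    have h1 : ((1/2:ℝ))^l < (1/2)^k :=
      pow_lt_pow_right_of_lt_one₀ (by norm_num) (by norm_num) hkl
    have h2 : ((1/2:ℝ))^k + (1/2)^l < 2 * (1/2)^k := by linarith
    have h3 : (2:ℝ) * (1/2)^k ≤ (1/2)^i := by
      have : ((1/2:ℝ))^k = (1/2)^(k-1) * (1/2) := by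
        rw [← pow_succ]
        congr 1
        omega
      rw [this]
      have h4 : ((1/2:ℝ))^(k-1) ≤ (1/2)^i :=
        pow_le_pow_of_le_one (by norm_num) (by norm_num) (by omega)
      linarith
    have h5 : (0:ℝ) < (1/2)^j := pow_pos hr j
    have : ((1/2:ℝ))^k + (1/2)^l < (1/2)^i + (1/2)^j := by linarith
    linarith
  · have h1 : (2:ℝ)^k < 2^l := pow_lt_pow_right₀ one_lt_two hkl
    have h2 : (2:ℝ)^k + 2^l < 2^(l+1) := by rw [pow_succ]; linarith
    have h3 : (2:ℝ)^(l+1) ≤ 2^j := pow_le_pow_right₀ one_le_two (by omega)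
    have h4 : (0:ℝ) < 2^i := pow_pos (by norm_num) i
    linarith
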